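/- arXiv:2509.00408 — 8 statements merged into one kernel-verified Lean document; each statement's English description precedes it below -/
import Mathlib

section
/- Let X be a real-valued integrable random variable on a probability space and let 0 < α < 1/2. Then the function φ_α : ℝ → ℝ defined by φ_α(x) = E[X] + ((2α − 1)/(1 − α))·E[(X − x)⁺] is a contraction; more precisely, it is Lipschitz continuous with Lipschitz constant (1 − 2α)/(1 − α), which lies strictly between 0 and 1. -/
open MeasureTheory
open scoped ProbabilityTheory

/-- The one-sided fixed point map `φ_α(x) = E[X] + ((2α − 1)/(1 − α))·E[(X − x)⁺]`
for `0 < α < 1/2` is a contraction: it is Lipschitz with constant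
`(1 − 2α)/(1 − α)`, which lies strictly between 0 and 1. -/
theorem stmt_0 {Ω : Type*} [MeasureSpace Ω] [IsProbabilityMeasure (ℙ : Measure Ω)]
    (X : Ω → ℝ) (hX : Integrable X) (α : ℝ) (hα0 : 0 < α) (hα1 : α < 1 / 2) :
    0 < (1 - 2 * α) / (1 - α) ∧ (1 - 2 * α) / (1 - α) < 1 ∧
      ∀ x y : ℝ,
        |((∫ ω, X ω) + (2 * α - 1) / (1 - α) * ∫ ω, max (X ω - x) 0) -
            ((∫ ω, X ω) + (2 * α - 1) / (1 - α) * ∫ ω, max (X ω - y) 0)| ≤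
          (1 - 2 * α) / (1 - α) * |x - y| := by
  have hden : (0:ℝ) < 1 - α := by linarith
  have hnum : (0:ℝ) < 1 - 2 * α := by linarith
  refine ⟨div_pos hnum hden, ?_, ?_⟩
  · rw [div_lt_one hden]; linarith
  · intro x y
    have hix : Integrable (fun ω => max (X ω - x) 0) := (hX.sub (integrable_const x)).pos_part
    have hiy : Integrable (fun ω => max (X ω - y) 0) := (hX.sub (integrable_const y)).pos_part
    have key : |(∫ ω, max (X ω - x) 0) - ∫ ω, max (X ω - y) 0| ≤ |x - y| := by
      rw [← integral_sub hix hiy]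
      have h := norm_integral_le_of_norm_le_const (μ := (ℙ : Measure Ω))
        (f := fun ω => max (X ω - x) 0 - max (X ω - y) 0) (C := |x - y|) ?_
      · simpa [measure_univ] using h
      · refine Filter.Eventually.of_forall fun ω => ?_
        have := abs_max_sub_max_le_abs (X ω - x) (X ω - y) 0
        calc ‖max (X ω - x) 0 - max (X ω - y) 0‖ ≤ |X ω - x - (X ω - y)| := this
          _ = |x - y| := by rw [show X ω - x - (X ω - y) = -(x - y) by ring, abs_neg]
    have habs : |(2 * α - 1) / (1 - α)| = (1 - 2 * α) / (1 - α) := by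
      rw [abs_div, abs_of_pos hden, abs_of_neg (by linarith : 2 * α - 1 < 0)]
      ring_nf
    calc |((∫ ω, X ω) + (2 * α - 1) / (1 - α) * ∫ ω, max (X ω - x) 0) -
            ((∫ ω, X ω) + (2 * α - 1) / (1 - α) * ∫ ω, max (X ω - y) 0)|
        = |(2 * α - 1) / (1 - α)| * |(∫ ω, max (X ω - x) 0) - ∫ ω, max (X ω - y) 0| := by
          rw [← abs_mul]; congr 1; ring
      _ ≤ (1 - 2 * α) / (1 - α) * |x - y| := by
          rw [habs]; exact mul_le_mul_of_nonneg_left key (div_pos hnum hden).le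
end

section
/- Let X be a real-valued integrable random variable on a probability space and let 1/2 < α < 1. Then the function φ_α : ℝ → ℝ defined by φ_α(x) = E[X] + ((2α − 1)/α)·E[(X − x)⁻] is a contraction; more precisely, it is Lipschitz continuous with Lipschitz constant (2α − 1)/α, which lies strictly between 0 and 1. -/
open MeasureTheory
open scoped ProbabilityTheory

lemma aux_int {Ω : Type*} [MeasureSpace Ω] [IsProbabilityMeasure (ℙ : Measure Ω)]
    (X : Ω → ℝ) (hX : Integrable X) (x : ℝ) :
    Integrable (fun ω => max (x - X ω) 0) := by
  have : Integrable (fun ω => x - X ω) := (integrable_const x).sub hX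
  exact this.pos_part

/-- The one-sided fixed point map `φ_α(x) = E[X] + ((2α − 1)/α)·E[(X − x)⁻]`
for `1/2 < α < 1` is a contraction: it is Lipschitz with constant
`(2α − 1)/α`, which lies strictly between 0 and 1. -/
theorem stmt_1 {Ω : Type*} [MeasureSpace Ω] [IsProbabilityMeasure (ℙ : Measure Ω)]
    (X : Ω → ℝ) (hX : Integrable X) (α : ℝ) (hα0 : 1 / 2 < α) (hα1 : α < 1) :
    0 < (2 * α - 1) / α ∧ (2 * α - 1) / α < 1 ∧
      ∀ x y : ℝ,
        |((∫ ω, X ω) + (2 * α - 1) / α * ∫ ω, max (x - X ω) 0) -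
            ((∫ ω, X ω) + (2 * α - 1) / α * ∫ ω, max (y - X ω) 0)| ≤
          (2 * α - 1) / α * |x - y| := by
  have hαpos : 0 < α := by linarith
  have hc0 : 0 < (2 * α - 1) / α := div_pos (by linarith) (by linarith)
  refine ⟨hc0, by rw [div_lt_one hαpos]; linarith, fun x y => ?_⟩
  have hix := aux_int X hX x
  have hiy := aux_int X hX y
  have key : |(∫ ω, max (x - X ω) 0) - ∫ ω, max (y - X ω) 0| ≤ |x - y| := by
    rw [← integral_sub hix hiy]
    calc |∫ ω, (max (x - X ω) 0 - max (y - X ω) 0)|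
        ≤ ∫ ω, |max (x - X ω) 0 - max (y - X ω) 0| := (by simpa using norm_integral_le_integral_norm (μ := (ℙ : Measure Ω)) (fun ω => max (x - X ω) 0 - max (y - X ω) 0))
      _ ≤ ∫ _ω : Ω, |x - y| := by
          apply integral_mono ((hix.sub hiy).abs) (integrable_const _)
          intro ω
          have : |max (x - X ω) 0 - max (y - X ω) 0| ≤ |(x - X ω) - (y - X ω)| :=
            abs_max_sub_max_le_abs _ _ _
          simpa using this
      _ = |x - y| := by simp
  calc |((∫ ω, X ω) + (2 * α - 1) / α * ∫ ω, max (x - X ω) 0) -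
        ((∫ ω, X ω) + (2 * α - 1) / α * ∫ ω, max (y - X ω) 0)|
      = (2 * α - 1) / α * |(∫ ω, max (x - X ω) 0) - ∫ ω, max (y - X ω) 0| := by
        rw [add_sub_add_left_eq_sub, ← mul_sub, abs_mul, abs_of_pos hc0]
    _ ≤ (2 * α - 1) / α * |x - y| := by
        exact mul_le_mul_of_nonneg_left key hc0.le
end

section
/- Let X be a real-valued integrable random variable on a probability space and let 0 < α < 1/2. Then there exists a unique point e ∈ ℝ with e = E[X] + ((2α − 1)/(1 − α))·E[(X − e)⁺], and for every starting point x₀ ∈ ℝ the sequence defined by x_{i+1} = E[X] + ((2α − 1)/(1 − α))·E[(X − x_i)⁺] converges to e. -/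
open MeasureTheory
open scoped ProbabilityTheory

/-- For `0 < α < 1/2` the map `φ_α(x) = E[X] + ((2α − 1)/(1 − α))·E[(X − x)⁺]`
has a unique fixed point `e`, and for every starting point the fixed point
iteration `x_{i+1} = φ_α(x_i)` converges to `e`. -/
theorem stmt_2 {Ω : Type*} [MeasureSpace Ω] [IsProbabilityMeasure (ℙ : Measure Ω)]
    (X : Ω → ℝ) (hX : Integrable X) (α : ℝ) (hα0 : 0 < α) (hα1 : α < 1 / 2) :
    ∃ e : ℝ,
      (e = (∫ ω, X ω) + (2 * α - 1) / (1 - α) * ∫ ω, max (X ω - e) 0) ∧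
      (∀ e' : ℝ,
        e' = (∫ ω, X ω) + (2 * α - 1) / (1 - α) * ∫ ω, max (X ω - e') 0 → e' = e) ∧
      ∀ x : ℕ → ℝ,
        (∀ i : ℕ,
          x (i + 1) = (∫ ω, X ω) + (2 * α - 1) / (1 - α) * ∫ ω, max (X ω - x i) 0) →
        Filter.Tendsto x Filter.atTop (nhds e) := by
  have h1α : (0:ℝ) < 1 - α := by linarith
  have h2α : (0:ℝ) < 1 - 2 * α := by linarith
  set φ : ℝ → ℝ := fun y => (∫ ω, X ω) + (2 * α - 1) / (1 - α) * ∫ ω, max (X ω - y) 0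
    with hφ
  set K : NNReal := ⟨(1 - 2 * α) / (1 - α), by positivity⟩ with hK
  have hKlt : K < 1 := by
    rw [← NNReal.coe_lt_coe]
    show (1 - 2*α)/(1-α) < 1
    rw [div_lt_one h1α]; linarith
  have hint : ∀ y : ℝ, Integrable (fun ω => max (X ω - y) 0) := fun y =>
    (hX.sub (integrable_const y)).pos_part
  have hlip : LipschitzWith K φ := by
    apply LipschitzWith.of_dist_le_mul
    intro a b
    have hsub : (∫ ω, max (X ω - a) 0) - ∫ ω, max (X ω - b) 0
        = ∫ ω, (max (X ω - a) 0 - max (X ω - b) 0) :=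
      (integral_sub (hint a) (hint b)).symm
    have hbound : |(∫ ω, max (X ω - a) 0) - ∫ ω, max (X ω - b) 0| ≤ |a - b| := by
      rw [hsub]
      calc |∫ ω, (max (X ω - a) 0 - max (X ω - b) 0)|
          ≤ ∫ ω, |max (X ω - a) 0 - max (X ω - b) 0| :=
            by simpa [Real.norm_eq_abs] using
              norm_integral_le_integral_norm (μ := ℙ)
                (fun ω => max (X ω - a) 0 - max (X ω - b) 0)
        _ ≤ ∫ _ω : Ω, |a - b| := by
            apply integral_mono ((hint a).sub (hint b)).abs (integrable_const _)
            intro ω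
            calc |max (X ω - a) 0 - max (X ω - b) 0| ≤ |(X ω - a) - (X ω - b)| :=
                  abs_max_sub_max_le_abs _ _ _
              _ = |a - b| := by rw [abs_sub_comm]; ring_nf
        _ = |a - b| := by simp
    have hdist : dist (φ a) (φ b)
        = |(2 * α - 1) / (1 - α)| * |(∫ ω, max (X ω - a) 0) - ∫ ω, max (X ω - b) 0| := by
      rw [Real.dist_eq, hφ]
      simp only [add_sub_add_left_eq_sub, ← mul_sub, abs_mul]
    rw [hdist]
    have habs : |(2 * α - 1) / (1 - α)| = (K : ℝ) := by
      rw [abs_div, abs_of_pos h1α, abs_of_neg (by linarith : 2*α - 1 < 0)]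
      show -(2*α-1)/(1-α) = (1-2*α)/(1-α)
      ring_nf
    rw [habs, Real.dist_eq]
    exact mul_le_mul_of_nonneg_left hbound K.2
  have hc : ContractingWith K φ := ⟨hKlt, hlip⟩
  refine ⟨hc.fixedPoint φ, ?_, ?_, ?_⟩
  · exact (hc.fixedPoint_isFixedPt).symm
  · intro e' he'
    exact hc.fixedPoint_unique he'.symm
  · intro x hx
    have hiter : ∀ n, x n = φ^[n] (x 0) := by
      intro n
      induction n with
      | zero => simp
      | succ n ih =>
        rw [Function.iterate_succ_apply', ← ih, hx n]
    have := hc.tendsto_iterate_fixedPoint (x 0)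
    exact this.congr fun n => (hiter n).symm
end

section
/- Let X be a real-valued integrable random variable on a probability space, 0 < α < 1, and let e ∈ ℝ satisfy α·E[(X − e)⁺] = (1 − α)·E[(X − e)⁻]. Then for the function ψ_α(x) = (α·E[X·1_{X>x}] + (1 − α)·E[X·1_{X≤x}]) / (α·P(X > x) + (1 − α)·P(X ≤ x)) one has: (a) if x ≥ e then ψ_α(x) ≤ x; (b) if x ≤ e then ψ_α(x) ≥ x. -/
open MeasureTheory
open scoped ProbabilityTheory

/-- The two-sided fixed point map
`ψ_α(x) = (α·E[X·1_{X>x}] + (1−α)·E[X·1_{X≤x}]) / (α·P(X>x) + (1−α)·P(X≤x))`. -/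
noncomputable def psi {Ω : Type*} [MeasureSpace Ω] (X : Ω → ℝ) (α : ℝ) (x : ℝ) : ℝ :=
  (α * (∫ ω in {ω | x < X ω}, X ω) + (1 - α) * ∫ ω in {ω | X ω ≤ x}, X ω) /
    (α * (ℙ {ω | x < X ω}).toReal + (1 - α) * (ℙ {ω | X ω ≤ x}).toReal)

/-- If `e` is the `α`-expectile of `X`, then `ψ_α(x) ≤ x` for `x ≥ e`
and `ψ_α(x) ≥ x` for `x ≤ e`. -/
theorem stmt_6 {Ω : Type*} [MeasureSpace Ω] [IsProbabilityMeasure (ℙ : Measure Ω)]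
    (X : Ω → ℝ) (hX : Integrable X) (α : ℝ) (hα0 : 0 < α) (hα1 : α < 1) (e : ℝ)
    (he : α * (∫ ω, max (X ω - e) 0) = (1 - α) * ∫ ω, max (e - X ω) 0) :
    ∀ x : ℝ, (e ≤ x → psi X α x ≤ x) ∧ (x ≤ e → x ≤ psi X α x) := by
  obtain ⟨Y, hYm, hXY⟩ := hX.1
  have hY : Integrable Y := hX.congr hXY
  have heY : α * (∫ ω, max (Y ω - e) 0) = (1 - α) * ∫ ω, max (e - Y ω) 0 := by
    rw [← integral_congr_ae (hXY.mono fun ω h => by simp only [h] :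
          (fun ω => max (X ω - e) 0) =ᵐ[ℙ] fun ω => max (Y ω - e) 0),
        ← integral_congr_ae (hXY.mono fun ω h => by simp only [h] :
          (fun ω => max (e - X ω) 0) =ᵐ[ℙ] fun ω => max (e - Y ω) 0)]
    exact he
  intro x
  have hset1 : {ω | x < X ω} =ᵐ[ℙ] {ω | x < Y ω} :=
    hXY.mono fun ω h => by change (x < X ω) = (x < Y ω); rw [h]
  have hset2 : {ω | X ω ≤ x} =ᵐ[ℙ] {ω | Y ω ≤ x} :=
    hXY.mono fun ω h => by change (X ω ≤ x) = (Y ω ≤ x); rw [h]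
  have h1 : ∫ ω in {ω | x < X ω}, X ω = ∫ ω in {ω | x < Y ω}, Y ω := by
    rw [Measure.restrict_congr_set hset1]
    exact integral_congr_ae (ae_restrict_of_ae hXY)
  have h2 : ∫ ω in {ω | X ω ≤ x}, X ω = ∫ ω in {ω | Y ω ≤ x}, Y ω := by
    rw [Measure.restrict_congr_set hset2]
    exact integral_congr_ae (ae_restrict_of_ae hXY)
  have hpsi : psi X α x = psi Y α x := by
    unfold psi
    rw [h1, h2, measure_congr hset1, measure_congr hset2]
  rw [hpsi]
  unfold psi
  set s : Set Ω := {ω | x < Y ω} with hsdef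
  have hsm : MeasurableSet s := measurableSet_lt measurable_const hYm.measurable
  have hcompl : {ω | Y ω ≤ x} = sᶜ := by ext ω; simp [hsdef, not_lt]
  rw [hcompl]
  have hp0 : 0 ≤ (ℙ s).toReal := ENNReal.toReal_nonneg
  have hq0 : 0 ≤ (ℙ sᶜ).toReal := ENNReal.toReal_nonneg
  have hpq : (ℙ s).toReal + (ℙ sᶜ).toReal = 1 := by
    rw [← ENNReal.toReal_add (measure_ne_top _ _) (measure_ne_top _ _),
      measure_add_measure_compl hsm]
    simp
  have hD : 0 < α * (ℙ s).toReal + (1 - α) * (ℙ sᶜ).toReal := by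
    have hm : 0 < min α (1 - α) := lt_min hα0 (by linarith)
    have h1' := mul_le_mul_of_nonneg_right (min_le_left α (1 - α)) hp0
    have h2' := mul_le_mul_of_nonneg_right (min_le_right α (1 - α)) hq0
    have hmsum : min α (1 - α) * (ℙ s).toReal + min α (1 - α) * (ℙ sᶜ).toReal
        = min α (1 - α) := by rw [← mul_add, hpq, mul_one]
    linarith
  -- integrability
  have hInt1 : Integrable (fun ω => max (Y ω - x) 0) := (hY.sub (integrable_const x)).pos_part
  have hInt2 : Integrable (fun ω => max (x - Y ω) 0) := ((integrable_const x).sub hY).pos_part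
  have hInt1e : Integrable (fun ω => max (Y ω - e) 0) := (hY.sub (integrable_const e)).pos_part
  have hInt2e : Integrable (fun ω => max (e - Y ω) 0) := ((integrable_const e).sub hY).pos_part
  -- split integrals
  have hsplit1 : ∫ ω in s, Y ω = (∫ ω, max (Y ω - x) 0) + x * (ℙ s).toReal := by
    have hind : ∀ ω, s.indicator (fun ω => Y ω - x) ω = max (Y ω - x) 0 := by
      intro ω
      by_cases h : ω ∈ s
      · rw [Set.indicator_of_mem h]
        have hx : x < Y ω := h
        rw [max_eq_left (by linarith)]
      · rw [Set.indicator_of_notMem h]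
        have hx : ¬ x < Y ω := h
        rw [max_eq_right (by push_neg at hx; linarith)]
    have := integral_indicator (μ := ℙ) (f := fun ω => Y ω - x) hsm
    rw [integral_congr_ae (ae_of_all _ hind)] at this
    rw [integral_sub hY.restrict (integrable_const x), setIntegral_const, smul_eq_mul, measureReal_def] at this
    linarith
  have hsplit2 : ∫ ω in sᶜ, Y ω = x * (ℙ sᶜ).toReal - ∫ ω, max (x - Y ω) 0 := by
    have hind : ∀ ω, sᶜ.indicator (fun ω => x - Y ω) ω = max (x - Y ω) 0 := by
      intro ω
      by_cases h : ω ∈ sᶜ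
      · rw [Set.indicator_of_mem h]
        have hx : ¬ x < Y ω := h
        rw [max_eq_left (by push_neg at hx; linarith)]
      · rw [Set.indicator_of_notMem h]
        have hx : x < Y ω := by simpa [hsdef] using h
        rw [max_eq_right (by linarith)]
    have := integral_indicator (μ := ℙ) (f := fun ω => x - Y ω) hsm.compl
    rw [integral_congr_ae (ae_of_all _ hind)] at this
    rw [integral_sub (integrable_const x) hY.restrict, setIntegral_const, smul_eq_mul, measureReal_def] at this
    linarith
  constructor
  · intro hex
    rw [div_le_iff₀ hD, hsplit1, hsplit2]
    have hm1 : ∫ ω, max (Y ω - x) 0 ≤ ∫ ω, max (Y ω - e) 0 :=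
      integral_mono hInt1 hInt1e fun ω => max_le_max (by linarith) le_rfl
    have hm2 : ∫ ω, max (e - Y ω) 0 ≤ ∫ ω, max (x - Y ω) 0 :=
      integral_mono hInt2e hInt2 fun ω => max_le_max (by linarith) le_rfl
    nlinarith [mul_le_mul_of_nonneg_left hm1 hα0.le,
      mul_le_mul_of_nonneg_left hm2 (by linarith : (0:ℝ) ≤ 1 - α)]
  · intro hxe
    rw [le_div_iff₀ hD, hsplit1, hsplit2]
    have hm1 : ∫ ω, max (Y ω - e) 0 ≤ ∫ ω, max (Y ω - x) 0 :=
      integral_mono hInt1e hInt1 fun ω => max_le_max (by linarith) le_rfl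
    have hm2 : ∫ ω, max (x - Y ω) 0 ≤ ∫ ω, max (e - Y ω) 0 :=
      integral_mono hInt2 hInt2e fun ω => max_le_max (by linarith) le_rfl
    nlinarith [mul_le_mul_of_nonneg_left hm1 hα0.le,
      mul_le_mul_of_nonneg_left hm2 (by linarith : (0:ℝ) ≤ 1 - α)]
end

section
/- Let X be a real-valued integrable random variable on a probability space, 0 < α < 1/2, and let e ∈ ℝ satisfy α·E[(X − e)⁺] = (1 − α)·E[(X − e)⁻]. Then e ≤ ψ_α(x) for every x ∈ ℝ, where ψ_α(x) = (α·E[X·1_{X>x}] + (1 − α)·E[X·1_{X≤x}]) / (α·P(X > x) + (1 − α)·P(X ≤ x)). -/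
open MeasureTheory
open scoped ProbabilityTheory

lemma psi_aux {Ω : Type*} [MeasureSpace Ω] [IsProbabilityMeasure (ℙ : Measure Ω)]
    (X : Ω → ℝ) (hX : Integrable X) (hm : Measurable X) (α : ℝ) (hα0 : 0 < α)
    (hα1 : α < 1 / 2) (e : ℝ)
    (he : α * (∫ ω, max (X ω - e) 0) = (1 - α) * ∫ ω, max (e - X ω) 0) (x : ℝ) :
    e ≤ psi X α x := by
  have hs : MeasurableSet {ω | x < X ω} := measurableSet_lt measurable_const hm
  have hsc : {ω | X ω ≤ x} = {ω | x < X ω}ᶜ := by ext ω; simp [not_lt]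
  set s := {ω | x < X ω} with hs_def
  have hpq : (ℙ s).toReal + (ℙ sᶜ).toReal = 1 := by
    rw [← ENNReal.toReal_add (measure_ne_top _ _) (measure_ne_top _ _),
      measure_add_measure_compl hs]
    simp
  set p := (ℙ s).toReal with hp_def
  set q := (ℙ sᶜ).toReal with hq_def
  have hp0 : 0 ≤ p := ENNReal.toReal_nonneg
  have hq0 : 0 ≤ q := ENNReal.toReal_nonneg
  have hD : 0 < α * p + (1 - α) * q := by nlinarith
  -- the comparison functions
  set f : Ω → ℝ := fun ω => (if x < X ω then α else 1 - α) * (X ω - e) with hf_def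
  set h : Ω → ℝ := fun ω => (if e < X ω then α else 1 - α) * (X ω - e) with hh_def
  have hXe : Integrable (fun ω => X ω - e) := hX.sub (integrable_const e)
  have hfh : ∀ ω, h ω ≤ f ω := by
    intro ω
    simp only [hf_def, hh_def]
    split_ifs with h1 h2 h2
    · exact le_refl _
    · push_neg at h2; nlinarith
    · push_neg at h1; nlinarith
    · exact le_refl _
  have hh_eq : h = fun ω => α * max (X ω - e) 0 - (1 - α) * max (e - X ω) 0 := by
    funext ω
    simp only [hh_def]
    rcases lt_or_ge e (X ω) with h1 | h1
    · rw [if_pos h1, max_eq_left (by linarith), max_eq_right (by linarith)]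
      ring
    · rw [if_neg (not_lt.mpr h1), max_eq_right (by linarith), max_eq_left (by linarith)]
      ring
  have hint1 : Integrable (fun ω => max (X ω - e) 0) := hXe.pos_part
  have hint2 : Integrable (fun ω => max (e - X ω) 0) :=
    ((integrable_const e).sub hX).pos_part
  have hh_int : Integrable h := by
    rw [hh_eq]
    exact (hint1.const_mul α).sub (hint2.const_mul (1 - α))
  have hh_integral : ∫ ω, h ω = 0 := by
    rw [hh_eq, integral_sub (hint1.const_mul α) (hint2.const_mul (1 - α)),
      integral_const_mul, integral_const_mul]
    linarith [he]
  have hf_meas : AEStronglyMeasurable f ℙ := by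
    apply Measurable.aestronglyMeasurable
    exact (Measurable.ite hs measurable_const measurable_const).mul (hm.sub measurable_const)
  have hf_int : Integrable f := by
    refine Integrable.mono hXe hf_meas (Filter.Eventually.of_forall fun ω => ?_)
    simp only [hf_def, Real.norm_eq_abs, abs_mul]
    have h1 : |(if x < X ω then α else 1 - α)| ≤ 1 := by
      split_ifs <;> rw [abs_of_nonneg (by linarith)] <;> linarith
    nlinarith [abs_nonneg (X ω - e), abs_nonneg (if x < X ω then α else 1 - α)]
  have hmono : (0:ℝ) ≤ ∫ ω, f ω := by
    rw [← hh_integral]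
    exact integral_mono hh_int hf_int hfh
  -- compute ∫ f
  have hfs : ∫ ω in s, f ω = α * ((∫ ω in s, X ω) - e * p) := by
    rw [setIntegral_congr_fun hs (g := fun ω => α * (X ω - e))
      (fun ω hω => by
        simp only [hs_def, Set.mem_setOf_eq] at hω
        simp only [hf_def]; rw [if_pos hω]),
      integral_const_mul, integral_sub hX.integrableOn (integrableOn_const (measure_lt_top _ _).ne),
      setIntegral_const]
    ring_nf
    rw [measureReal_def, ← hp_def]
  have hfsc : ∫ ω in sᶜ, f ω = (1 - α) * ((∫ ω in sᶜ, X ω) - e * q) := by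
    rw [setIntegral_congr_fun hs.compl (g := fun ω => (1 - α) * (X ω - e))
      (fun ω hω => by
        simp only [hf_def]
        simp only [hs_def, Set.mem_compl_iff, Set.mem_setOf_eq] at hω
        rw [if_neg hω]),
      integral_const_mul, integral_sub hX.integrableOn (integrableOn_const (measure_lt_top _ _).ne),
      setIntegral_const]
    ring_nf
    rw [measureReal_def, ← hq_def]
  have hsplit : ∫ ω, f ω = (∫ ω in s, f ω) + ∫ ω in sᶜ, f ω :=
    (integral_add_compl hs hf_int).symm
  rw [hsplit, hfs, hfsc] at hmono
  rw [psi, hsc]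
  rw [le_div_iff₀ hD]
  nlinarith [hmono]

/-- For `0 < α < 1/2` and `e` the `α`-expectile of `X`, one has `e ≤ ψ_α(x)`
for every real `x`. -/
theorem stmt_7 {Ω : Type*} [MeasureSpace Ω] [IsProbabilityMeasure (ℙ : Measure Ω)]
    (X : Ω → ℝ) (hX : Integrable X) (α : ℝ) (hα0 : 0 < α) (hα1 : α < 1 / 2) (e : ℝ)
    (he : α * (∫ ω, max (X ω - e) 0) = (1 - α) * ∫ ω, max (e - X ω) 0) :
    ∀ x : ℝ, e ≤ psi X α x := by
  intro x
  set Y : Ω → ℝ := hX.1.mk X with hY_def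
  have hYm : Measurable Y := hX.1.stronglyMeasurable_mk.measurable
  have hXY : X =ᵐ[ℙ] Y := hX.1.ae_eq_mk
  have hYint : Integrable Y := hX.congr hXY
  have heY : α * (∫ ω, max (Y ω - e) 0) = (1 - α) * ∫ ω, max (e - Y ω) 0 := by
    have h1 : (∫ ω, max (Y ω - e) 0) = ∫ ω, max (X ω - e) 0 :=
      integral_congr_ae (hXY.mono fun ω hω => by simp only [hω])
    have h2 : (∫ ω, max (e - Y ω) 0) = ∫ ω, max (e - X ω) 0 :=
      integral_congr_ae (hXY.mono fun ω hω => by simp only [hω])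
    rw [h1, h2]; exact he
  have hset1 : {ω | x < X ω} =ᵐ[ℙ] {ω | x < Y ω} :=
    hXY.mono fun ω hω => by change (x < X ω) = (x < Y ω); rw [hω]
  have hset2 : {ω | X ω ≤ x} =ᵐ[ℙ] {ω | Y ω ≤ x} :=
    hXY.mono fun ω hω => by change (X ω ≤ x) = (Y ω ≤ x); rw [hω]
  have hpsi : psi X α x = psi Y α x := by
    rw [psi, psi, measure_congr hset1, measure_congr hset2,
      setIntegral_congr_set hset1, setIntegral_congr_set hset2,
      integral_congr_ae (ae_restrict_of_ae hXY),
      integral_congr_ae (ae_restrict_of_ae hXY)]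
  rw [hpsi]
  exact psi_aux Y hYint hYm α hα0 hα1 e heY x
end

section
/- Let X be a real-valued integrable random variable on a probability space, 0 < α < 1/2, and let e ∈ ℝ be the unique real number satisfying α·E[(X − e)⁺] = (1 − α)·E[(X − e)⁻]. Let x₀ ∈ ℝ be arbitrary and define x_{i+1} = ψ_α(x_i) for i = 0, 1, 2, …, where ψ_α(x) = (α·E[X·1_{X>x}] + (1 − α)·E[X·1_{X≤x}]) / (α·P(X > x) + (1 − α)·P(X ≤ x)). Then the sequence (x_i) converges, its limit x̄ satisfies x̄ = ψ_α(x̄), and x̄ = e. -/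
open MeasureTheory
open scoped ProbabilityTheory

section Aux

variable {Ω : Type*} [MeasureSpace Ω] [IsProbabilityMeasure (ℙ : Measure Ω)]

noncomputable def auxD (Y : Ω → ℝ) (α t : ℝ) : ℝ :=
  α * (ℙ {ω | t < Y ω}).toReal + (1 - α) * (ℙ {ω | Y ω ≤ t}).toReal

noncomputable def auxN (Y : Ω → ℝ) (α t : ℝ) : ℝ :=
  α * (∫ ω in {ω | t < Y ω}, Y ω) + (1 - α) * ∫ ω in {ω | Y ω ≤ t}, Y ω

variable {Y : Ω → ℝ} {α : ℝ}

lemma aux_meas_lt (hYm : Measurable Y) (t : ℝ) : MeasurableSet {ω | t < Y ω} :=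
  measurableSet_lt measurable_const hYm

lemma aux_meas_le (hYm : Measurable Y) (t : ℝ) : MeasurableSet {ω | Y ω ≤ t} :=
  measurableSet_le hYm measurable_const

lemma aux_pq (hYm : Measurable Y) (t : ℝ) :
    (ℙ {ω | t < Y ω}).toReal + (ℙ {ω | Y ω ≤ t}).toReal = 1 := by
  have hd : Disjoint {ω | t < Y ω} {ω | Y ω ≤ t} := by
    rw [Set.disjoint_left]; intro ω h1 h2
    simp only [Set.mem_setOf_eq] at h1 h2; linarith
  have hu : {ω | t < Y ω} ∪ {ω | Y ω ≤ t} = Set.univ := by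
    ext ω; simpa using lt_or_ge t (Y ω)
  rw [← ENNReal.toReal_add (measure_ne_top _ _) (measure_ne_top _ _),
    ← measure_union hd (aux_meas_le hYm t), hu, measure_univ, ENNReal.toReal_one]

lemma auxD_pos (hYm : Measurable Y) (hα0 : 0 < α) (hα1 : α < 1 / 2) (t : ℝ) :
    0 < auxD Y α t := by
  have h := aux_pq hYm t
  have h1 : 0 ≤ (ℙ {ω | t < Y ω}).toReal := ENNReal.toReal_nonneg
  have h2 : 0 ≤ (ℙ {ω | Y ω ≤ t}).toReal := ENNReal.toReal_nonneg
  unfold auxD; nlinarith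

lemma aux_key (hYm : Measurable Y) (hY : Integrable Y) (hα0 : 0 < α) (hα1 : α < 1 / 2)
    {a b : ℝ} (hab : a ≤ b) :
    ∃ m I : ℝ, 0 ≤ m ∧ a * m ≤ I ∧ I ≤ b * m ∧ (1 - α) * m ≤ auxD Y α b ∧
      auxD Y α b = auxD Y α a + (1 - 2 * α) * m ∧
      auxN Y α b = auxN Y α a + (1 - 2 * α) * I := by
  set A : Set Ω := {ω | a < Y ω} ∩ {ω | Y ω ≤ b} with hA
  have hAm : MeasurableSet A := (aux_meas_lt hYm a).inter (aux_meas_le hYm b)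
  have hS : {ω | a < Y ω} = {ω | b < Y ω} ∪ A := by
    ext ω
    simp only [hA, Set.mem_union, Set.mem_inter_iff, Set.mem_setOf_eq]
    constructor
    · intro h
      rcases le_or_gt (Y ω) b with h2 | h2
      · exact Or.inr ⟨h, h2⟩
      · exact Or.inl h2
    · rintro (h | ⟨h, _⟩)
      · exact lt_of_le_of_lt hab h
      · exact h
  have hT : {ω | Y ω ≤ b} = {ω | Y ω ≤ a} ∪ A := by
    ext ω
    simp only [hA, Set.mem_union, Set.mem_inter_iff, Set.mem_setOf_eq]
    constructor
    · intro h
      rcases le_or_gt (Y ω) a with h2 | h2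
      · exact Or.inl h2
      · exact Or.inr ⟨h2, h⟩
    · rintro (h | ⟨_, h⟩)
      · exact le_trans h hab
      · exact h
  have hdS : Disjoint {ω | b < Y ω} A := by
    rw [Set.disjoint_left]; rintro ω h1 ⟨_, h2⟩
    simp only [Set.mem_setOf_eq] at h1 h2; linarith
  have hdT : Disjoint {ω | Y ω ≤ a} A := by
    rw [Set.disjoint_left]; rintro ω h1 ⟨h2, _⟩
    simp only [Set.mem_setOf_eq] at h1 h2; linarith
  have hmS : (ℙ {ω | a < Y ω}).toReal = (ℙ {ω | b < Y ω}).toReal + (ℙ A).toReal := by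
    rw [hS, measure_union hdS hAm, ENNReal.toReal_add (measure_ne_top _ _) (measure_ne_top _ _)]
  have hmT : (ℙ {ω | Y ω ≤ b}).toReal = (ℙ {ω | Y ω ≤ a}).toReal + (ℙ A).toReal := by
    rw [hT, measure_union hdT hAm, ENNReal.toReal_add (measure_ne_top _ _) (measure_ne_top _ _)]
  have hiS : ∫ ω in {ω | a < Y ω}, Y ω = (∫ ω in {ω | b < Y ω}, Y ω) + ∫ ω in A, Y ω := by
    rw [hS]; exact setIntegral_union hdS hAm hY.integrableOn hY.integrableOn
  have hiT : ∫ ω in {ω | Y ω ≤ b}, Y ω = (∫ ω in {ω | Y ω ≤ a}, Y ω) + ∫ ω in A, Y ω := by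
    rw [hT]; exact setIntegral_union hdT hAm hY.integrableOn hY.integrableOn
  refine ⟨(ℙ A).toReal, ∫ ω in A, Y ω, ENNReal.toReal_nonneg, ?_, ?_, ?_, ?_, ?_⟩
  · have h := setIntegral_mono_on ((integrable_const a).integrableOn) hY.integrableOn hAm
      (fun ω hω => hω.1.le)
    rwa [setIntegral_const, smul_eq_mul, mul_comm] at h
  · have h := setIntegral_mono_on hY.integrableOn ((integrable_const b).integrableOn) hAm
      (fun ω hω => hω.2)
    rwa [setIntegral_const, smul_eq_mul, mul_comm] at h
  · have hmq : (ℙ A).toReal ≤ (ℙ {ω | Y ω ≤ b}).toReal :=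
      ENNReal.toReal_mono (measure_ne_top _ _) (measure_mono Set.inter_subset_right)
    have h1α : (0 : ℝ) ≤ 1 - α := by linarith
    have h1 : 0 ≤ α * (ℙ {ω | b < Y ω}).toReal := mul_nonneg hα0.le ENNReal.toReal_nonneg
    have h2 := mul_le_mul_of_nonneg_left hmq h1α
    unfold auxD; linarith
  · unfold auxD; rw [hmS, hmT]; ring
  · unfold auxN; rw [hiS, hiT]; ring

end Aux

/-- For `0 < α < 1/2` and `e` the unique real number satisfying the first
order condition `α·E[(X − e)⁺] = (1 − α)·E[(X − e)⁻]`, any sequence generated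
by the fixed point iteration `x_{i+1} = ψ_α(x_i)` converges, its limit `x̄`
satisfies `x̄ = ψ_α(x̄)`, and `x̄ = e`. -/
theorem stmt_9 {Ω : Type*} [MeasureSpace Ω] [IsProbabilityMeasure (ℙ : Measure Ω)]
    (X : Ω → ℝ) (hX : Integrable X) (α : ℝ) (hα0 : 0 < α) (hα1 : α < 1 / 2) (e : ℝ)
    (he : α * (∫ ω, max (X ω - e) 0) = (1 - α) * ∫ ω, max (e - X ω) 0)
    (huniq : ∀ e' : ℝ,
      α * (∫ ω, max (X ω - e') 0) = (1 - α) * (∫ ω, max (e' - X ω) 0) → e' = e)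
    (x : ℕ → ℝ) (hx : ∀ i : ℕ, x (i + 1) = psi X α (x i)) :
    ∃ xbar : ℝ, Filter.Tendsto x Filter.atTop (nhds xbar) ∧
      xbar = psi X α xbar ∧ xbar = e := by
  classical
  obtain ⟨Y, hYm, hXY⟩ : ∃ Y : Ω → ℝ, Measurable Y ∧ X =ᵐ[ℙ] Y :=
    ⟨hX.1.mk X, hX.1.stronglyMeasurable_mk.measurable, hX.1.ae_eq_mk⟩
  have hY : Integrable Y := hX.congr hXY
  have hc : (0 : ℝ) < 1 - 2 * α := by linarith
  -- pointwise-in-t equality ψ(t) = auxN/auxD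
  have hsetlt : ∀ t : ℝ, ({ω | t < X ω} : Set Ω) =ᵐ[ℙ] {ω | t < Y ω} := fun t =>
    hXY.mono fun ω h => by
      show (t < X ω) = (t < Y ω)
      rw [h]
  have hsetle : ∀ t : ℝ, ({ω | X ω ≤ t} : Set Ω) =ᵐ[ℙ] {ω | Y ω ≤ t} := fun t =>
    hXY.mono fun ω h => by
      show (X ω ≤ t) = (Y ω ≤ t)
      rw [h]
  have hilt : ∀ t : ℝ, ∫ ω in {ω | t < X ω}, X ω = ∫ ω in {ω | t < Y ω}, Y ω := by
    intro t
    calc ∫ ω in {ω | t < X ω}, X ω = ∫ ω in {ω | t < X ω}, Y ω :=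
          integral_congr_ae (ae_restrict_of_ae hXY)
      _ = ∫ ω in {ω | t < Y ω}, Y ω := setIntegral_congr_set (hsetlt t)
  have hile : ∀ t : ℝ, ∫ ω in {ω | X ω ≤ t}, X ω = ∫ ω in {ω | Y ω ≤ t}, Y ω := by
    intro t
    calc ∫ ω in {ω | X ω ≤ t}, X ω = ∫ ω in {ω | X ω ≤ t}, Y ω :=
          integral_congr_ae (ae_restrict_of_ae hXY)
      _ = ∫ ω in {ω | Y ω ≤ t}, Y ω := setIntegral_congr_set (hsetle t)
  have hpsi : ∀ t : ℝ, psi X α t = auxN Y α t / auxD Y α t := by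
    intro t
    unfold psi auxN auxD
    rw [hilt t, hile t, measure_congr (hsetlt t), measure_congr (hsetle t)]
  have hD := auxD_pos hYm hα0 hα1
  -- first order condition transferred to Y and rewritten
  have heY : α * (∫ ω, max (Y ω - e) 0) = (1 - α) * ∫ ω, max (e - Y ω) 0 := by
    have h1 : ∫ ω, max (X ω - e) 0 = ∫ ω, max (Y ω - e) 0 :=
      integral_congr_ae (hXY.mono fun ω h => by simp only [h])
    have h2 : ∫ ω, max (e - X ω) 0 = ∫ ω, max (e - Y ω) 0 :=
      integral_congr_ae (hXY.mono fun ω h => by simp only [h])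
    rw [← h1, ← h2]; exact he
  have hpos : ∫ ω, max (Y ω - e) 0 =
      (∫ ω in {ω | e < Y ω}, Y ω) - e * (ℙ {ω | e < Y ω}).toReal := by
    have h1 : (fun ω => max (Y ω - e) 0) =
        Set.indicator {ω | e < Y ω} (fun ω => Y ω - e) := by
      funext ω
      simp only [Set.indicator_apply, Set.mem_setOf_eq]
      split_ifs with h
      · exact max_eq_left (by linarith)
      · push_neg at h
        exact max_eq_right (by linarith)
    rw [h1, integral_indicator (aux_meas_lt hYm e),
      integral_sub hY.integrableOn ((integrable_const e).integrableOn), setIntegral_const,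
      smul_eq_mul, mul_comm, measureReal_def]
  have hneg : ∫ ω, max (e - Y ω) 0 =
      e * (ℙ {ω | Y ω ≤ e}).toReal - ∫ ω in {ω | Y ω ≤ e}, Y ω := by
    have h1 : (fun ω => max (e - Y ω) 0) =
        Set.indicator {ω | Y ω ≤ e} (fun ω => e - Y ω) := by
      funext ω
      simp only [Set.indicator_apply, Set.mem_setOf_eq]
      split_ifs with h
      · exact max_eq_left (by linarith)
      · push_neg at h
        exact max_eq_right (by linarith)
    rw [h1, integral_indicator (aux_meas_le hYm e),
      integral_sub ((integrable_const e).integrableOn) hY.integrableOn, setIntegral_const,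
      smul_eq_mul, mul_comm, measureReal_def]
  have hNe : auxN Y α e = e * auxD Y α e := by
    rw [hpos, hneg] at heY
    unfold auxN auxD
    linear_combination heY
  have hfix : psi X α e = e := by
    rw [hpsi e, hNe, mul_div_assoc, div_self (ne_of_gt (hD e)), mul_one]
  -- ψ(t) ≥ e for every t
  have hge : ∀ t : ℝ, e ≤ psi X α t := by
    intro t
    rw [hpsi t, le_div_iff₀ (hD t)]
    rcases le_or_gt e t with h | h
    · obtain ⟨m, I, hm, haI, hIb, _, hDeq, hNeq⟩ := aux_key hYm hY hα0 hα1 h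
      have key : auxN Y α t - e * auxD Y α t = (1 - 2 * α) * (I - e * m) := by
        linear_combination hNeq - e * hDeq + hNe
      have hint := mul_le_mul_of_nonneg_left haI hc.le
      nlinarith [key, hint]
    · obtain ⟨m, I, hm, haI, hIb, _, hDeq, hNeq⟩ := aux_key hYm hY hα0 hα1 h.le
      have key : auxN Y α t - e * auxD Y α t = (1 - 2 * α) * (e * m - I) := by
        linear_combination hNe - hNeq + e * hDeq
      have hint := mul_le_mul_of_nonneg_left hIb hc.le
      nlinarith [key, hint]
  set qr : ℝ := (1 - 2 * α) / (1 - α) with hqr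
  have h1α : (0 : ℝ) < 1 - α := by linarith
  have hq0 : 0 ≤ qr := div_nonneg hc.le h1α.le
  have hq1 : qr < 1 := (div_lt_one h1α).2 (by linarith)
  have hqc : qr * (1 - α) = 1 - 2 * α := div_mul_cancel₀ _ (ne_of_gt h1α)
  -- contraction from the right of e
  have hcontract : ∀ t : ℝ, e ≤ t → psi X α t ≤ e + qr * (t - e) := by
    intro t h
    rw [hpsi t, div_le_iff₀ (hD t)]
    obtain ⟨m, I, hm, haI, hIb, hDm, hDeq, hNeq⟩ := aux_key hYm hY hα0 hα1 h
    have e1 : auxN Y α t - e * auxD Y α t = (1 - 2 * α) * (I - e * m) := by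
      linear_combination hNeq - e * hDeq + hNe
    have e2 : (1 - 2 * α) * (I - e * m) ≤ (1 - 2 * α) * ((t - e) * m) := by
      have : I - e * m ≤ (t - e) * m := by nlinarith
      exact mul_le_mul_of_nonneg_left this hc.le
    have e3 : (1 - 2 * α) * ((t - e) * m) ≤ qr * (t - e) * auxD Y α t := by
      have h4 : qr * ((1 - α) * m) ≤ qr * auxD Y α t := mul_le_mul_of_nonneg_left hDm hq0
      have h5 : (1 - 2 * α) * m = qr * ((1 - α) * m) := by rw [← hqc]; ring
      have h6 : (1 - 2 * α) * m ≤ qr * auxD Y α t := by linarith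
      calc (1 - 2 * α) * ((t - e) * m) = (t - e) * ((1 - 2 * α) * m) := by ring
        _ ≤ (t - e) * (qr * auxD Y α t) := mul_le_mul_of_nonneg_left h6 (by linarith)
        _ = qr * (t - e) * auxD Y α t := by ring
    nlinarith [e1, e2, e3]
  -- iterate estimates
  have hxge : ∀ n : ℕ, e ≤ x (n + 1) := fun n => by rw [hx n]; exact hge (x n)
  have hbound : ∀ n : ℕ, x (n + 1) ≤ e + qr ^ n * (x 1 - e) := by
    intro n
    induction n with
    | zero => simp
    | succ n ih =>
      have h1 : x (n + 2) ≤ e + qr * (x (n + 1) - e) := by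
        rw [hx (n + 1)]; exact hcontract _ (hxge n)
      have h2 : qr * (x (n + 1) - e) ≤ qr * (qr ^ n * (x 1 - e)) :=
        mul_le_mul_of_nonneg_left (by linarith) hq0
      have h3 : qr * (qr ^ n * (x 1 - e)) = qr ^ (n + 1) * (x 1 - e) := by ring
      linarith
  have htop : Filter.Tendsto (fun n => x (n + 1)) Filter.atTop (nhds e) := by
    have hub : Filter.Tendsto (fun n : ℕ => e + qr ^ n * (x 1 - e)) Filter.atTop (nhds e) := by
      have hpow : Filter.Tendsto (fun n : ℕ => qr ^ n * (x 1 - e)) Filter.atTop (nhds 0) := by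
        simpa using (tendsto_pow_atTop_nhds_zero_of_lt_one hq0 hq1).mul_const (x 1 - e)
      have h2 := hpow.const_add e
      simpa using h2
    exact tendsto_of_tendsto_of_tendsto_of_le_of_le tendsto_const_nhds hub
      (fun n => hxge n) (fun n => hbound n)
  have hxt : Filter.Tendsto x Filter.atTop (nhds e) :=
    (Filter.tendsto_add_atTop_iff_nat 1).1 htop
  exact ⟨e, hxt, hfix.symm, rfl⟩
end

section
/- Let z_1 ≤ z_2 ≤ … ≤ z_N be real numbers, z̄ = (1/N)·Σ_{n=1}^N z_n, and let 0 < α < 1/2. Define φ̂_α(x) = z̄ + ((2α − 1)/(N(1 − α)))·Σ_{n : z_n ≥ x} (z_n − x). If x ∈ [z_1, z_N], then φ̂_α(x) ∈ [z_1, z̄] ⊆ [z_1, z_N]. -/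
open Finset

/-- The one-sided empirical fixed point map
`φ̂_α(x) = z̄ + ((2α − 1)/(N(1 − α)))·Σ_{n : z_n ≥ x} (z_n − x)`,
for a sample `z 0, …, z n` of size `N = n + 1` with mean `z̄`. -/
noncomputable def phiHat (n : ℕ) (z : Fin (n + 1) → ℝ) (α : ℝ) (x : ℝ) : ℝ :=
  (∑ i, z i) / (n + 1) +
    (2 * α - 1) / ((n + 1) * (1 - α)) * ∑ i ∈ univ.filter (fun i => x ≤ z i), (z i - x)

/-- For `0 < α < 1/2` and `x ∈ [z_1, z_N]`, one has
`φ̂_α(x) ∈ [z_1, z̄] ⊆ [z_1, z_N]`. -/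
theorem stmt_11 (n : ℕ) (z : Fin (n + 1) → ℝ) (hz : Monotone z)
    (α : ℝ) (hα0 : 0 < α) (hα1 : α < 1 / 2) (x : ℝ)
    (hx : x ∈ Set.Icc (z 0) (z (Fin.last n))) :
    phiHat n z α x ∈ Set.Icc (z 0) ((∑ i, z i) / (n + 1)) ∧
      Set.Icc (z 0) ((∑ i, z i) / (n + 1)) ⊆ Set.Icc (z 0) (z (Fin.last n)) := by
  obtain ⟨hx0, hxN⟩ := hx
  have hN : (0:ℝ) < (n:ℝ) + 1 := by positivity
  have h1α : (0:ℝ) < 1 - α := by linarith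
  set S := ∑ i ∈ univ.filter (fun i => x ≤ z i), (z i - x) with hSdef
  set c := (2 * α - 1) / (((n:ℝ) + 1) * (1 - α)) with hcdef
  have hS : 0 ≤ S := by
    apply Finset.sum_nonneg
    intro i hi
    simp only [Finset.mem_filter] at hi
    linarith [hi.2]
  have hc : c ≤ 0 := by
    apply div_nonpos_of_nonpos_of_nonneg
    · linarith
    · positivity
  have hz0 : ∀ i, z 0 ≤ z i := fun i => hz (Fin.zero_le i)
  have hSle : S ≤ ∑ i, (z i - z 0) := by
    calc S ≤ ∑ i ∈ univ.filter (fun i => x ≤ z i), (z i - z 0) := by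
            apply Finset.sum_le_sum
            intro i _
            linarith
      _ ≤ ∑ i, (z i - z 0) := by
            apply Finset.sum_le_sum_of_subset_of_nonneg (Finset.filter_subset _ _)
            intro i _ _
            linarith [hz0 i]
  have hsum : ∑ i, (z i - z 0) = (∑ i, z i) - ((n:ℝ) + 1) * z 0 := by
    rw [Finset.sum_sub_distrib, Finset.sum_const, Finset.card_univ, Fintype.card_fin]
    push_cast
    ring
  have hkey : ((n:ℝ) + 1) * z 0 ≤ (∑ i, z i) - S := by
    rw [hsum] at hSle; linarith
  -- lower bound on c
  have hcge : -(1 / ((n:ℝ) + 1)) ≤ c := by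
    have h1 : -(1 / ((n:ℝ) + 1)) = (α - 1) / (((n:ℝ) + 1) * (1 - α)) := by
      field_simp
      ring
    rw [h1, hcdef, div_le_div_iff₀ (by positivity) (by positivity)]
    nlinarith [mul_pos hN h1α]
  have hmul : -(1 / ((n:ℝ) + 1)) * S ≤ c * S := mul_le_mul_of_nonneg_right hcge hS
  have hlow : z 0 ≤ (∑ i, z i) / ((n:ℝ) + 1) + c * S := by
    have h2 : z 0 ≤ ((∑ i, z i) - S) / ((n:ℝ) + 1) := by
      rw [le_div_iff₀ hN]; linarith
    have h3 : ((∑ i, z i) - S) / ((n:ℝ) + 1) =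
        (∑ i, z i) / ((n:ℝ) + 1) + -(1 / ((n:ℝ) + 1)) * S := by ring
    linarith [h3 ▸ h2]
  have hcs : c * S ≤ 0 := mul_nonpos_of_nonpos_of_nonneg hc hS
  have hmean : (∑ i, z i) / ((n:ℝ) + 1) ≤ z (Fin.last n) := by
    have : (∑ i, z i) ≤ ((n:ℝ) + 1) * z (Fin.last n) := by
      calc (∑ i, z i) ≤ ∑ _i : Fin (n+1), z (Fin.last n) :=
            Finset.sum_le_sum (fun i _ => hz (Fin.le_last i))
        _ = ((n:ℝ) + 1) * z (Fin.last n) := by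
            rw [Finset.sum_const, Finset.card_univ, Fintype.card_fin]; push_cast; ring
    rw [div_le_iff₀ hN]; linarith
  constructor
  · constructor
    · show z 0 ≤ phiHat n z α x
      unfold phiHat
      push_cast
      exact hlow
    · show phiHat n z α x ≤ _
      unfold phiHat
      push_cast
      linarith
  · exact Set.Icc_subset_Icc le_rfl hmean
end

section
/- Let z_1 < z_2 < … < z_N be real numbers, 0 < α < 1/2, and let e be the empirical α-expectile of the sample, i.e., the unique real number with α·Σ_{n=1}^N max(z_n − e, 0) = (1 − α)·Σ_{n=1}^N max(e − z_n, 0). Define ψ̂_α(x) = (α·Σ_{n : z_n > x} z_n + (1 − α)·Σ_{n : z_n ≤ x} z_n) / (α·#{n : z_n > x} + (1 − α)·#{n : z_n ≤ x}) and, for any x₀ ∈ ℝ, the iteration x_{i+1} = ψ̂_α(x_i). Then the iteration terminates after at most N steps: there exists i ≤ N such that x_{i+1} = x_i = e. -/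
open Finset

/-- The two-sided empirical fixed point map
`ψ̂_α(x) = (α·Σ_{i : z_i > x} z_i + (1 − α)·Σ_{i : z_i ≤ x} z_i) /
(α·#{i : z_i > x} + (1 − α)·#{i : z_i ≤ x})`
for a sample `z 0, …, z n` of size `N = n + 1`. -/
noncomputable def psiHat (n : ℕ) (z : Fin (n + 1) → ℝ) (α : ℝ) (x : ℝ) : ℝ :=
  (α * ∑ i ∈ univ.filter (fun i => x < z i), z i +
      (1 - α) * ∑ i ∈ univ.filter (fun i => z i ≤ x), z i) /
    (α * ((univ.filter (fun i => x < z i)).card : ℝ) +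
      (1 - α) * ((univ.filter (fun i => z i ≤ x)).card : ℝ))

namespace Stmt18

noncomputable def W {n : ℕ} (z : Fin (n + 1) → ℝ) (α : ℝ) (x : ℝ) (i : Fin (n + 1)) : ℝ :=
  if z i ≤ x then 1 - α else α

variable {n : ℕ} {z : Fin (n + 1) → ℝ} {α : ℝ}

lemma W_pos (hα0 : 0 < α) (hα1 : α < 1 / 2) (x : ℝ) (i : Fin (n + 1)) :
    0 < W z α x i := by
  unfold W; split <;> linarith

lemma sumW_pos (hα0 : 0 < α) (hα1 : α < 1 / 2) (x : ℝ) :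
    0 < ∑ i, W z α x i :=
  Finset.sum_pos (fun i _ => W_pos hα0 hα1 x i) univ_nonempty

lemma psiHat_eq (x : ℝ) :
    psiHat n z α x = (∑ i, W z α x i * z i) / (∑ i, W z α x i) := by
  unfold psiHat
  have hcard : ∀ (p : Fin (n + 1) → Prop) [DecidablePred p],
      (((univ.filter p).card : ℕ) : ℝ) = ∑ i, if p i then (1 : ℝ) else 0 := by
    intro p _
    rw [Finset.card_filter]
    push_cast
    exact Finset.sum_congr rfl fun i _ => by split <;> simp
  rw [hcard, hcard, Finset.sum_filter, Finset.sum_filter]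
  congr 1
  · rw [Finset.mul_sum, Finset.mul_sum, ← Finset.sum_add_distrib]
    refine Finset.sum_congr rfl fun i _ => ?_
    unfold W
    by_cases h : z i ≤ x
    · rw [if_pos h, if_neg (not_lt.mpr h), if_pos h]; ring
    · rw [if_neg h, if_pos (not_le.mp h), if_neg h]; ring
  · rw [Finset.mul_sum, Finset.mul_sum, ← Finset.sum_add_distrib]
    refine Finset.sum_congr rfl fun i _ => ?_
    unfold W
    by_cases h : z i ≤ x
    · rw [if_pos h, if_neg (not_lt.mpr h), if_pos h]; ring
    · rw [if_neg h, if_pos (not_le.mp h), if_neg h]; ring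

lemma num_sub (x c : ℝ) :
    ∑ i, W z α x i * (z i - c)
      = (∑ i, W z α x i * z i) - c * ∑ i, W z α x i := by
  rw [Finset.mul_sum, ← Finset.sum_sub_distrib]
  exact Finset.sum_congr rfl fun i _ => by ring

lemma Gform (x : ℝ) :
    ∑ i, W z α x i * (z i - x)
      = α * ∑ i, max (z i - x) 0 - (1 - α) * ∑ i, max (x - z i) 0 := by
  rw [Finset.mul_sum, Finset.mul_sum, ← Finset.sum_sub_distrib]
  refine Finset.sum_congr rfl fun i _ => ?_
  unfold W
  by_cases h : z i ≤ x
  · rw [if_pos h, max_eq_right (by linarith), max_eq_left (by linarith)]; ring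
  · rw [if_neg h, max_eq_left (by linarith [not_le.mp h]),
      max_eq_right (by linarith [not_le.mp h])]; ring

lemma S_strict_anti (hα0 : 0 < α) (hα1 : α < 1 / 2) {x y : ℝ} (hxy : x < y) :
    ∑ i, W z α y i * (z i - y) < ∑ i, W z α x i * (z i - x) := by
  refine Finset.sum_lt_sum_of_nonempty univ_nonempty fun i _ => ?_
  unfold W
  by_cases h1 : z i ≤ x
  · rw [if_pos h1, if_pos (h1.trans hxy.le)]
    nlinarith
  · have h1' := not_le.mp h1
    by_cases h2 : z i ≤ y
    · rw [if_neg h1, if_pos h2]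
      nlinarith
    · have h2' := not_le.mp h2
      rw [if_neg h1, if_neg h2]
      nlinarith

lemma W_ge_term {e : ℝ} (hα0 : 0 < α) (hα1 : α < 1 / 2) (x : ℝ) (i : Fin (n + 1)) :
    W z α e i * (z i - e) ≤ W z α x i * (z i - e) := by
  unfold W
  by_cases h1 : z i ≤ e
  · by_cases h2 : z i ≤ x
    · rw [if_pos h1, if_pos h2]
    · rw [if_pos h1, if_neg h2]; nlinarith
  · have h1' := not_le.mp h1
    by_cases h2 : z i ≤ x
    · rw [if_neg h1, if_pos h2]; nlinarith
    · rw [if_neg h1, if_neg h2]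

end Stmt18

/-- Finite termination of the two-sided fixed point iteration: for
`0 < α < 1/2` and `e` the empirical `α`-expectile (the unique real number with
`α·Σ_n max(z_n − e, 0) = (1 − α)·Σ_n max(e − z_n, 0)`), any sequence with
`x_{i+1} = ψ̂_α(x_i)` reaches `e` after at most `N = n + 1` steps: there is
`i ≤ N` with `x_{i+1} = x_i = e`. -/
theorem stmt_18 (n : ℕ) (z : Fin (n + 1) → ℝ) (hz : StrictMono z)
    (α : ℝ) (hα0 : 0 < α) (hα1 : α < 1 / 2) (e : ℝ)
    (he : α * ∑ i, max (z i - e) 0 = (1 - α) * ∑ i, max (e - z i) 0)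
    (huniq : ∀ e' : ℝ,
      α * ∑ i, max (z i - e') 0 = (1 - α) * ∑ i, max (e' - z i) 0 → e' = e)
    (x : ℕ → ℝ) (hx : ∀ i : ℕ, x (i + 1) = psiHat n z α (x i)) :
    ∃ i : ℕ, i ≤ n + 1 ∧ x (i + 1) = x i ∧ x i = e := by
  classical
  open Stmt18 in
  -- basic positivity
  have hD : ∀ y : ℝ, 0 < ∑ i, W z α y i := sumW_pos hα0 hα1
  -- the FOC function vanishes at e
  have g0 : ∑ i, W z α e i * (z i - e) = 0 := by
    rw [Gform]; linarith
  -- uniqueness in terms of the weighted sum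
  have hfixuniq : ∀ y : ℝ, (∑ i, W z α y i * (z i - y)) = 0 → y = e := by
    intro y hy
    apply huniq
    have := Gform (z := z) (α := α) y
    linarith
  -- fixed point characterization of psiHat
  have hpsi_iff : ∀ y : ℝ, psiHat n z α y = y ↔ (∑ i, W z α y i * (z i - y)) = 0 := by
    intro y
    rw [psiHat_eq, div_eq_iff (hD y).ne', num_sub]
    constructor <;> intro h <;> nlinarith [hD y]
  -- psiHat e = e
  have hpsie : psiHat n z α e = e := (hpsi_iff e).mpr g0
  -- psiHat x ≥ e for all x
  have hge : ∀ y : ℝ, e ≤ psiHat n z α y := by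
    intro y
    rw [psiHat_eq, le_div_iff₀ (hD y)]
    have h1 : (0:ℝ) ≤ ∑ i, W z α y i * (z i - e) := by
      rw [← g0]
      exact Finset.sum_le_sum fun i _ => W_ge_term hα0 hα1 y i
    rw [num_sub] at h1
    linarith
  -- the weighted sum is ≤ 0 for y ≥ e
  have hSle : ∀ y : ℝ, e ≤ y → (∑ i, W z α y i * (z i - y)) ≤ 0 := by
    intro y hy
    rcases eq_or_lt_of_le hy with h | h
    · rw [← h]; exact le_of_eq g0
    · have := S_strict_anti (z := z) hα0 hα1 h
      linarith
  -- psiHat y ≤ y when e ≤ y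
  have hle : ∀ y : ℝ, e ≤ y → psiHat n z α y ≤ y := by
    intro y hy
    rw [psiHat_eq, div_le_iff₀ (hD y)]
    have := hSle y hy
    rw [num_sub] at this
    linarith
  -- the filter sets
  set A : ℝ → Finset (Fin (n + 1)) := fun y => univ.filter (fun i => z i ≤ y) with hA
  have hAmono : ∀ {u v : ℝ}, u ≤ v → A u ⊆ A v := by
    intro u v huv i hi
    simp only [hA, Finset.mem_filter, Finset.mem_univ, true_and] at *
    linarith
  have hAeq_psi : ∀ {u v : ℝ}, A u = A v → psiHat n z α u = psiHat n z α v := by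
    intro u v huv
    have hW : ∀ i, W z α u i = W z α v i := by
      intro i
      have hiff : (z i ≤ u) ↔ (z i ≤ v) := by
        have := Finset.ext_iff.mp huv i
        simpa [hA] using this
      unfold W
      rw [if_congr hiff rfl rfl]
    rw [psiHat_eq, psiHat_eq]
    simp only [hW]
  -- z 0 ≤ e, so (A e).card ≥ 1
  have hz0e : z 0 ≤ e := by
    by_contra hcon
    push_neg at hcon
    have h1 := S_strict_anti (z := z) hα0 hα1 hcon
    rw [g0] at h1
    have h2 : (0:ℝ) ≤ ∑ i, W z α (z 0) i * (z i - z 0) := by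
      refine Finset.sum_nonneg fun i _ => ?_
      have : z 0 ≤ z i := hz.monotone (Fin.zero_le i)
      have := W_pos (z := z) hα0 hα1 (z 0) i
      nlinarith
    linarith
  have hKpos : 1 ≤ (A e).card := by
    refine Finset.card_pos.mpr ⟨0, ?_⟩
    simp [hA, hz0e]
  -- cards bounded by n when applied to a psiHat value, for n ≥ 1
  have hstep_lt_last : 0 < n → ∀ y : ℝ, psiHat n z α y < z (Fin.last n) := by
    intro hn y
    rw [psiHat_eq, div_lt_iff₀ (hD y)]
    have h1 : ∑ i, W z α y i * (z i - z (Fin.last n)) < 0 := by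
      have := Finset.sum_lt_sum (s := (univ : Finset (Fin (n+1))))
        (f := fun i => W z α y i * (z i - z (Fin.last n))) (g := fun _ => (0:ℝ))
        (fun i _ => by
          have h2 : z i ≤ z (Fin.last n) := hz.monotone (Fin.le_last i)
          have h3 := W_pos (z := z) hα0 hα1 y i
          exact mul_nonpos_of_nonneg_of_nonpos h3.le (by linarith))
        ⟨0, Finset.mem_univ _, by
          have h2 : z 0 < z (Fin.last n) := hz (by
            simp [Fin.lt_iff_val_lt_val, Fin.last]; omega)
          have h3 := W_pos (z := z) hα0 hα1 y 0
          exact mul_neg_of_pos_of_neg h3 (by linarith)⟩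
      simpa using this
    rw [num_sub] at h1
    linarith
  -- main invariant
  set K := (A e).card with hK
  have hKle : ∀ {y : ℝ}, e ≤ y → K ≤ (A y).card := fun hy =>
    Finset.card_le_card (hAmono hy)
  -- if e ≤ y and (A y).card = K then psiHat y = e
  have hhitK : ∀ y : ℝ, e ≤ y → (A y).card = K → psiHat n z α y = e := by
    intro y hy hcy
    have hAeq : A e = A y :=
      Finset.eq_of_subset_of_card_le (hAmono hy) (le_of_eq hcy)
    rw [hAeq_psi hAeq.symm, hpsie]
  -- strict decrease of the card along the iteration while above K
  have hdec : ∀ j : ℕ, e ≤ x (j + 1) →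
      (A (x (j + 2))).card ≠ K → (A (x (j + 2))).card < (A (x (j + 1))).card := by
    intro j hej hne
    have hle2 : x (j + 2) ≤ x (j + 1) := by rw [hx (j + 1)]; exact hle _ hej
    have hsub : A (x (j + 2)) ⊆ A (x (j + 1)) := hAmono hle2
    rcases lt_or_eq_of_le (Finset.card_le_card hsub) with h | h
    · exact h
    · exfalso
      have hAe : A (x (j + 2)) = A (x (j + 1)) :=
        Finset.eq_of_subset_of_card_le hsub (le_of_eq h.symm)
      have hfix2 : psiHat n z α (x (j + 2)) = x (j + 2) := by
        rw [hAeq_psi hAe, ← hx (j + 1)]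
      have : x (j + 2) = e := hfixuniq _ ((hpsi_iff _).mp hfix2)
      apply hne
      rw [this]
  -- invariant: e ≤ x (j+1) and the card bound
  have hinv : ∀ j : ℕ, e ≤ x (j + 1) ∧
      ((A (x (j + 1))).card + j ≤ (A (x 1)).card ∨ (A (x (j + 1))).card = K) := by
    intro j
    induction j with
    | zero =>
        constructor
        · rw [hx 0]; exact hge _
        · left; simp
    | succ j ih =>
        obtain ⟨hej, hcase⟩ := ih
        have hej' : e ≤ x (j + 2) := by rw [hx (j + 1)]; exact hge _
        refine ⟨hej', ?_⟩
        by_cases hK2 : (A (x (j + 2))).card = K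
        · right; exact hK2
        · left
          have hlt := hdec j hej hK2
          have hrw : (A (x (j + 1 + 1))).card = (A (x (j + 2))).card := rfl
          rcases hcase with h | h
          · omega
          · -- (A (x (j+1))).card = K but then x (j+2) = e, contradiction with hK2
            exfalso
            apply hK2
            have : x (j + 2) = e := by rw [hx (j + 1)]; exact hhitK _ hej h
            rw [this]
  -- now conclude
  rcases Nat.eq_zero_or_pos n with hn | hn
  · -- n = 0 : x 2 = x 1 forces x 1 = e
    subst hn
    have h12 : x 2 = x 1 := by
      rw [hx 1, hx 0, psiHat_eq, psiHat_eq]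
      have : ∀ y : ℝ, (∑ i : Fin 1, W z α y i * z i) / (∑ i : Fin 1, W z α y i) = z 0 := by
        intro y
        rw [Fin.sum_univ_one, Fin.sum_univ_one]
        field_simp [(W_pos (z := z) hα0 hα1 y 0).ne']
      rw [this, this]
    have hfix1 : psiHat 0 z α (x 1) = x 1 := by rw [← hx 1, h12]
    have h1e : x 1 = e := hfixuniq _ ((hpsi_iff _).mp hfix1)
    exact ⟨1, by omega, h12, h1e⟩
  · -- n ≥ 1
    have hc1 : (A (x 1)).card ≤ n := by
      have hlast : x 1 < z (Fin.last n) := by rw [hx 0]; exact hstep_lt_last hn _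
      have hnotmem : Fin.last n ∉ A (x 1) := by
        simp only [hA, Finset.mem_filter, Finset.mem_univ, true_and, not_le]
        exact hlast
      have hsub : A (x 1) ⊆ univ.erase (Fin.last n) := by
        intro i hi
        refine Finset.mem_erase.mpr ⟨?_, Finset.mem_univ _⟩
        rintro rfl
        exact hnotmem hi
      have := Finset.card_le_card hsub
      rwa [Finset.card_erase_of_mem (Finset.mem_univ _), Finset.card_univ,
        Fintype.card_fin] at this
    set j0 := (A (x 1)).card - K with hj0
    have hKc1 : K ≤ (A (x 1)).card := hKle (hinv 0).1
    obtain ⟨hej0, hcase⟩ := hinv j0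
    have hcK : (A (x (j0 + 1))).card = K := by
      have hge' : K ≤ (A (x (j0 + 1))).card := hKle hej0
      rcases hcase with h | h
      · omega
      · exact h
    have hxe : x (j0 + 2) = e := by rw [hx (j0 + 1)]; exact hhitK _ hej0 hcK
    have hxe' : x (j0 + 3) = e := by rw [hx (j0 + 2), hxe, hpsie]
    refine ⟨j0 + 2, by omega, ?_, hxe⟩
    rw [hxe', hxe]
end
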